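/- Let Λ ≥ 1 and let U_Λ(r) = B_Λ - B_Λ(r) for 0 ≤ r ≤ 2Λ, where B_Λ(r) is given by the explicit double-integral formula involving Z_Λ(r), and B_Λ = B_Λ(0). Then |U_Λ(r) - U(r)| ≤ (258/π) · r/(2√(1+Λ²)) for all 0 ≤ r ≤ 2Λ. -/

import Mathlib

open Real

/-- `E x = √(1+x²)`. -/
noncomputable def E (x : ℝ) : ℝ := Real.sqrt (1 + x ^ 2)

/-- `Z_Λ(r)`, extended by continuity at `r = 0`. -/
noncomputable def ZL (Λ r : ℝ) : ℝ :=
  if r = 0 then Λ / E Λ else (E Λ - E (Λ - r)) / r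

/-- The cut-off function `B_Λ(r)`. -/
noncomputable def BL (Λ r : ℝ) : ℝ :=
  1 / π * (∫ z in (0:ℝ)..ZL Λ r,
      (z ^ 2 - z ^ 4 / 3) / ((1 - z ^ 2) * (1 + r ^ 2 * (1 - z ^ 2) / 4)))
    + r / (2 * π) * (∫ z in (0:ℝ)..ZL Λ r, (z - z ^ 3 / 3) / (E Λ - r * z / 2))

/-- The constant `B_Λ = B_Λ(0) = (1/π)∫₀^{Λ/E(Λ)} (z² - z⁴/3)/(1-z²) dz`. -/
noncomputable def BC (Λ : ℝ) : ℝ := BL Λ 0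

/-- The cut-off Uehling multiplier `U_Λ`. -/
noncomputable def UL (Λ r : ℝ) : ℝ :=
  if 0 ≤ r ∧ r ≤ 2 * Λ then BC Λ - BL Λ r else 0

/-- The Uehling multiplier `U`. -/
noncomputable def U (r : ℝ) : ℝ :=
  r ^ 2 / (4 * π) * ∫ z in (0:ℝ)..1, (z ^ 2 - z ^ 4 / 3) / (1 + r ^ 2 * (1 - z ^ 2) / 4)

private lemma abs3 (a b c : ℝ) : |a - b - c| ≤ |a| + |b| + |c| := by
  have h1 := le_abs_self a; have h2 := le_abs_self b; have h3 := le_abs_self c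
  have h4 := neg_abs_le a; have h5 := neg_abs_le b; have h6 := neg_abs_le c
  rw [abs_le]; constructor <;> linarith

private lemma fnum_nonneg {z : ℝ} (h0 : 0 ≤ z) (h1 : z ≤ 1) : 0 ≤ z ^ 2 - z ^ 4 / 3 := by
  nlinarith [mul_nonneg (sq_nonneg z) (by nlinarith : (0:ℝ) ≤ 1 - z ^ 2)]

private lemma fnum_le {z : ℝ} (h0 : 0 ≤ z) (h1 : z ≤ 1) : z ^ 2 - z ^ 4 / 3 ≤ 2 / 3 := by
  nlinarith [mul_nonneg (by nlinarith : (0:ℝ) ≤ 1 - z ^ 2) (by nlinarith : (0:ℝ) ≤ 2 - z ^ 2)]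

private lemma gnum_nonneg {z : ℝ} (h0 : 0 ≤ z) (h1 : z ≤ 1) : 0 ≤ z - z ^ 3 / 3 := by
  nlinarith [mul_nonneg h0 (by nlinarith : (0:ℝ) ≤ 1 - z ^ 2)]

private lemma gnum_le {z : ℝ} (h0 : 0 ≤ z) (h1 : z ≤ 1) : z - z ^ 3 / 3 ≤ 2 / 3 := by
  nlinarith [mul_nonneg (sq_nonneg (z - 1)) (by linarith : (0:ℝ) ≤ z + 2)]

private lemma sqone {z : ℝ} (h0 : 0 ≤ z) (h1 : z ≤ 1) : z ^ 2 ≤ 1 := by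
  nlinarith

private lemma log129 : Real.log 129 ≤ 5 := by
  rw [Real.log_le_iff_le_exp (by norm_num)]
  have h1 : (2.7:ℝ) ≤ Real.exp 1 := by
    have := Real.exp_one_gt_d9; linarith
  have h2 : ((2.7:ℝ)) ^ (5:ℕ) ≤ (Real.exp 1) ^ (5:ℕ) := by
    apply pow_le_pow_left₀ (by norm_num) h1
  have h3 : (Real.exp 1) ^ (5:ℕ) = Real.exp 5 := by
    rw [← Real.exp_nat_mul]; norm_num
  nlinarith [h2, h3]

private lemma Zle_aux (Λ r P Es : ℝ) (hΛ0 : 0 < Λ) (hrpos : 0 < r) (hr2 : r ≤ 2 * Λ)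
    (hP0 : 0 < P) (hEs0 : 0 < Es) (hP2 : P ^ 2 = 1 + Λ ^ 2)
    (hEs2 : Es ^ 2 = 1 + (Λ - r) ^ 2) :
    (2 * Λ - r) * P ≤ Λ * (P + Es) := by
  nlinarith [hP2, hEs2, mul_pos hΛ0 hEs0, sq_nonneg (Λ * Es - P * (Λ - r)),
    sq_nonneg (Λ * Es + P * (Λ - r)), mul_pos hΛ0 hP0]

private lemma Zdiff_aux (Λ r P Es : ℝ) (hΛ0 : 0 < Λ) (hrpos : 0 < r)
    (hP0 : 0 < P) (hEs0 : 0 < Es) (hP2 : P ^ 2 = 1 + Λ ^ 2)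
    (hEs2 : Es ^ 2 = 1 + (Λ - r) ^ 2) (hPΛ : Λ ≤ P) (hcase : r ≤ P / 4) :
    Λ / P - (P - Es) / r ≤ r / P ^ 3 := by
  have hrne : r ≠ 0 := ne_of_gt hrpos
  have hrΛ4 : r * Λ ≤ P ^ 2 / 4 := by
    have h := mul_le_mul hcase hPΛ hΛ0.le (by positivity : (0:ℝ) ≤ P / 4)
    linarith [h]
  have hid : (P ^ 3 * Es) ^ 2 = P ^ 4 * ((P ^ 2 - r * Λ) ^ 2 + r ^ 2) := by
    have hq : P ^ 2 * (1 + (Λ - r) ^ 2) = (P ^ 2 - r * Λ) ^ 2 + r ^ 2 := by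
      linear_combination (r ^ 2 - P ^ 2) * hP2
    calc (P ^ 3 * Es) ^ 2 = P ^ 4 * (P ^ 2 * Es ^ 2) := by ring
      _ = P ^ 4 * (P ^ 2 * (1 + (Λ - r) ^ 2)) := by rw [hEs2]
      _ = P ^ 4 * ((P ^ 2 - r * Λ) ^ 2 + r ^ 2) := by rw [hq]
  have hbpos : 0 ≤ P ^ 4 - r * Λ * P ^ 2 + 2 * r ^ 2 / 3 := by
    have h := mul_le_mul_of_nonneg_right hrΛ4 (sq_nonneg P)
    have h4 : (0:ℝ) ≤ P ^ 4 := by positivity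
    have h5 : (0:ℝ) ≤ r ^ 2 := sq_nonneg r
    nlinarith [h]
  have hPE : P ^ 3 * Es ≤ P ^ 4 - r * Λ * P ^ 2 + 2 * r ^ 2 / 3 := by
    have hsq : (P ^ 3 * Es) ^ 2 ≤ (P ^ 4 - r * Λ * P ^ 2 + 2 * r ^ 2 / 3) ^ 2 := by
      rw [hid]
      have h := mul_le_mul_of_nonneg_left hrΛ4
        (by positivity : (0:ℝ) ≤ r ^ 2 * P ^ 2)
      nlinarith [h, sq_nonneg (r ^ 2)]
    have hapos : 0 ≤ P ^ 3 * Es := by positivity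
    exact (pow_le_pow_iff_left₀ hapos hbpos (by norm_num)).mp hsq
  rw [div_sub_div _ _ hP0.ne' hrne, div_le_div_iff₀ (by positivity) (by positivity)]
  nlinarith [mul_le_mul_of_nonneg_left hPE hP0.le, mul_nonneg (sq_nonneg r) hP0.le]

set_option maxHeartbeats 1000000 in
theorem UL_sub_U_pointwise_bound (Λ : ℝ) (hΛ : 1 ≤ Λ) (r : ℝ) (hr : 0 ≤ r) (hr2 : r ≤ 2 * Λ) :
    |UL Λ r - U r| ≤ 258 / π * (r / (2 * Real.sqrt (1 + Λ ^ 2))) := by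
  have hπ : 0 < π := Real.pi_pos
  rcases eq_or_lt_of_le hr with hr0 | hrpos
  · -- r = 0 case
    rw [← hr0]
    have h1 : U 0 = 0 := by simp [U]
    have h2 : UL Λ 0 = 0 := by
      rw [UL, if_pos ⟨le_refl (0:ℝ), by linarith⟩, BC]; ring
    rw [h1, h2]; simp
  · -- main case : 0 < r
    have hrne : r ≠ 0 := ne_of_gt hrpos
    have hΛ0 : (0:ℝ) < Λ := by linarith
    obtain ⟨P, hPdef⟩ : ∃ x : ℝ, x = Real.sqrt (1 + Λ ^ 2) := ⟨_, rfl⟩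
    obtain ⟨Es, hEsdef⟩ : ∃ x : ℝ, x = Real.sqrt (1 + (Λ - r) ^ 2) := ⟨_, rfl⟩
    rw [← hPdef]
    have hP0 : 0 < P := by rw [hPdef]; positivity
    have hP2 : P ^ 2 = 1 + Λ ^ 2 := by rw [hPdef]; exact Real.sq_sqrt (by positivity)
    have hEs0 : 0 < Es := by rw [hEsdef]; positivity
    have hEs2 : Es ^ 2 = 1 + (Λ - r) ^ 2 := by
      rw [hEsdef]; exact Real.sq_sqrt (by positivity)
    have hP1 : 1 ≤ P := by nlinarith
    have hPΛ : Λ < P := by nlinarith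
    have hEs1 : 1 ≤ Es := by nlinarith
    have hEsP : Es ≤ P := by nlinarith [add_pos hP0 hEs0]
    set Z0 := Λ / P with hZ0def
    set Z := (P - Es) / r with hZdef
    have hZ0pos : 0 ≤ Z0 := by positivity
    have hZ0lt1 : Z0 < 1 := (div_lt_one hP0).mpr hPΛ
    have hZpos : 0 ≤ Z := div_nonneg (by linarith) hr
    have hrZ : r * Z = P - Es := by rw [hZdef]; field_simp
    have hZeq : Z = (2 * Λ - r) / (P + Es) := by
      rw [hZdef, div_eq_div_iff hrne (by positivity : P + Es ≠ 0)]
      linear_combination hP2 - hEs2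
    have hZZ0 : Z ≤ Z0 := by
      rw [hZeq, hZ0def, div_le_div_iff₀ (by positivity) hP0]
      exact Zle_aux Λ r P Es hΛ0 hrpos hr2 hP0 hEs0 hP2 hEs2
    have hZ1 : Z ≤ 1 := le_trans hZZ0 hZ0lt1.le
    have hZ01 : Z0 ≤ 1 := hZ0lt1.le
    have hP3 : P ^ 3 = P * (1 + Λ ^ 2) := by rw [← hP2]; ring
    -- denominator facts
    have hz2 : ∀ z ∈ Set.Icc (0:ℝ) Z0, 1 ≤ P ^ 2 * (1 - z ^ 2) := by
      intro z hz
      have hzP : z * P ≤ Λ := by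
        have h2 := hz.2
        rw [hZ0def, le_div_iff₀ hP0] at h2
        exact h2
      have h2 : (z * P) ^ 2 ≤ Λ ^ 2 := by
        have hzP0 : (0:ℝ) ≤ z * P := mul_nonneg hz.1 hP0.le
        have hm := mul_nonneg (by linarith : (0:ℝ) ≤ Λ - z * P)
          (by linarith : (0:ℝ) ≤ Λ + z * P)
        linarith [hm]
      have hexp : P ^ 2 * (1 - z ^ 2) = P ^ 2 - (z * P) ^ 2 := by ring
      rw [hexp]
      linarith [h2, hP2]
    have hD2 : ∀ z ∈ Set.Icc (0:ℝ) Z0, 0 < 1 - z ^ 2 := by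
      intro z hz
      have h := hz2 z hz
      have hp : (0:ℝ) < P ^ 2 := pow_pos hP0 2
      by_contra h'
      push_neg at h'
      have h2 : P ^ 2 * (1 - z ^ 2) ≤ 0 := mul_nonpos_of_nonneg_of_nonpos hp.le h'
      linarith
    have hD1 : ∀ z : ℝ, 0 ≤ z → z ≤ 1 → 0 < 1 + r ^ 2 * (1 - z ^ 2) / 4 := by
      intro z h0 h1
      have : 0 ≤ r ^ 2 * (1 - z ^ 2) := mul_nonneg (sq_nonneg r) (by linarith [sqone h0 h1])
      linarith
    have hD3 : ∀ z ∈ Set.Icc (0:ℝ) Z, 0 < P - r * z / 2 := by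
      intro z hz
      have h1 : r * z ≤ r * Z := mul_le_mul_of_nonneg_left hz.2 hrpos.le
      rw [hrZ] at h1
      linarith
    -- unfolding the definitions
    have hEP : E Λ = P := by rw [hPdef]; rfl
    have hEsEq : E (Λ - r) = Es := by rw [hEsdef]; rfl
    have hZLr : ZL Λ r = Z := by
      rw [ZL, if_neg hrne, hEP, hEsEq, hZdef]
    have hBC : BC Λ = 1 / π * ∫ z in (0:ℝ)..Z0, (z ^ 2 - z ^ 4 / 3) / (1 - z ^ 2) := by
      rw [BC, BL, ZL, if_pos rfl, hEP, hZ0def]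
      norm_num
    have hBLr : BL Λ r = 1 / π * (∫ z in (0:ℝ)..Z,
          (z ^ 2 - z ^ 4 / 3) / ((1 - z ^ 2) * (1 + r ^ 2 * (1 - z ^ 2) / 4)))
        + r / (2 * π) * (∫ z in (0:ℝ)..Z, (z - z ^ 3 / 3) / (P - r * z / 2)) := by
      rw [BL, hZLr, hEP]
    have hUL : UL Λ r = BC Λ - BL Λ r := by rw [UL, if_pos ⟨hr, hr2⟩]
    -- continuity facts
    have hcF : ContinuousOn (fun z : ℝ =>
        (z ^ 2 - z ^ 4 / 3) / ((1 - z ^ 2) * (1 + r ^ 2 * (1 - z ^ 2) / 4)))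
        (Set.Icc 0 Z0) := by
      have hne : ∀ z ∈ Set.Icc (0:ℝ) Z0,
          (1 - z ^ 2) * (1 + r ^ 2 * (1 - z ^ 2) / 4) ≠ 0 := fun z hz =>
        ne_of_gt (mul_pos (hD2 z hz) (hD1 z hz.1 (le_trans hz.2 hZ01)))
      apply ContinuousOn.div ?_ ?_ hne
      · fun_prop
      · fun_prop
    have hcFD : ContinuousOn (fun z : ℝ =>
        (z ^ 2 - z ^ 4 / 3) / (1 + r ^ 2 * (1 - z ^ 2) / 4)) (Set.Icc 0 1) := by
      have hne : ∀ z ∈ Set.Icc (0:ℝ) 1,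
          (1 + r ^ 2 * (1 - z ^ 2) / 4) ≠ 0 := fun z hz =>
        ne_of_gt (hD1 z hz.1 hz.2)
      apply ContinuousOn.div ?_ ?_ hne
      · fun_prop
      · fun_prop
    -- integrability
    have hIntF1 : IntervalIntegrable (fun z : ℝ =>
        (z ^ 2 - z ^ 4 / 3) / ((1 - z ^ 2) * (1 + r ^ 2 * (1 - z ^ 2) / 4))) MeasureTheory.volume 0 Z := by
      apply ContinuousOn.intervalIntegrable
      apply hcF.mono
      rw [Set.uIcc_of_le hZpos]
      exact Set.Icc_subset_Icc le_rfl hZZ0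
    have hIntF2 : IntervalIntegrable (fun z : ℝ =>
        (z ^ 2 - z ^ 4 / 3) / ((1 - z ^ 2) * (1 + r ^ 2 * (1 - z ^ 2) / 4))) MeasureTheory.volume Z Z0 := by
      apply ContinuousOn.intervalIntegrable
      apply hcF.mono
      rw [Set.uIcc_of_le hZZ0]
      exact Set.Icc_subset_Icc hZpos le_rfl
    have hIntFD1 : IntervalIntegrable (fun z : ℝ =>
        (z ^ 2 - z ^ 4 / 3) / (1 + r ^ 2 * (1 - z ^ 2) / 4)) MeasureTheory.volume 0 Z0 := by
      apply ContinuousOn.intervalIntegrable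
      apply hcFD.mono
      rw [Set.uIcc_of_le hZ0pos]
      exact Set.Icc_subset_Icc le_rfl hZ01
    have hIntFD2 : IntervalIntegrable (fun z : ℝ =>
        (z ^ 2 - z ^ 4 / 3) / (1 + r ^ 2 * (1 - z ^ 2) / 4)) MeasureTheory.volume Z0 1 := by
      apply ContinuousOn.intervalIntegrable
      apply hcFD.mono
      rw [Set.uIcc_of_le hZ01]
      exact Set.Icc_subset_Icc hZ0pos le_rfl
    have hIntPsid : IntervalIntegrable (fun z : ℝ =>
        1 / ((1 - z) * (1 + r ^ 2 / 4 * (1 - z)))) MeasureTheory.volume Z Z0 := by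
      apply ContinuousOn.intervalIntegrable
      have hne : ∀ z ∈ Set.uIcc Z Z0, (1 - z) * (1 + r ^ 2 / 4 * (1 - z)) ≠ 0 := by
        intro z hz
        rw [Set.uIcc_of_le hZZ0] at hz
        have hz1 : z < 1 := lt_of_le_of_lt hz.2 hZ0lt1
        have h1 : (0:ℝ) < 1 - z := by linarith
        have h2 : (0:ℝ) < 1 + r ^ 2 / 4 * (1 - z) := by
          linarith [mul_nonneg (sq_nonneg r) h1.le]
        exact ne_of_gt (mul_pos h1 h2)
      apply ContinuousOn.div ?_ ?_ hne
      · fun_prop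
      · fun_prop
    -- the key pointwise decomposition on [0, Z0]
    have e1 : (∫ z in (0:ℝ)..Z0, (z ^ 2 - z ^ 4 / 3) / (1 - z ^ 2))
        = (∫ z in (0:ℝ)..Z0,
            (z ^ 2 - z ^ 4 / 3) / ((1 - z ^ 2) * (1 + r ^ 2 * (1 - z ^ 2) / 4)))
          + r ^ 2 / 4 * (∫ z in (0:ℝ)..Z0,
            (z ^ 2 - z ^ 4 / 3) / (1 + r ^ 2 * (1 - z ^ 2) / 4)) := by
      have hEq : Set.EqOn (fun z : ℝ => (z ^ 2 - z ^ 4 / 3) / (1 - z ^ 2))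
          (fun z : ℝ => (z ^ 2 - z ^ 4 / 3) / ((1 - z ^ 2) * (1 + r ^ 2 * (1 - z ^ 2) / 4))
            + r ^ 2 / 4 * ((z ^ 2 - z ^ 4 / 3) / (1 + r ^ 2 * (1 - z ^ 2) / 4)))
          (Set.uIcc 0 Z0) := by
        intro z hz
        rw [Set.uIcc_of_le hZ0pos] at hz
        have h1 : (1 - z ^ 2) ≠ 0 := ne_of_gt (hD2 z hz)
        have h2 : (1 + r ^ 2 * (1 - z ^ 2) / 4) ≠ 0 :=
          ne_of_gt (hD1 z hz.1 (le_trans hz.2 hZ01))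
        simp only
        have e : (z ^ 2 - z ^ 4 / 3) / ((1 - z ^ 2) * (1 + r ^ 2 * (1 - z ^ 2) / 4))
            + r ^ 2 / 4 * ((z ^ 2 - z ^ 4 / 3) / (1 + r ^ 2 * (1 - z ^ 2) / 4))
            = (z ^ 2 - z ^ 4 / 3) / (1 - z ^ 2) := by
          rw [mul_div_assoc', div_add_div _ _ (mul_ne_zero h1 h2) h2,
            div_eq_div_iff (mul_ne_zero (mul_ne_zero h1 h2) h2) h1]
          ring
        exact e.symm
      rw [intervalIntegral.integral_congr hEq,
        intervalIntegral.integral_add (hIntF1.trans hIntF2) (hIntFD1.const_mul (r ^ 2 / 4)),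
        intervalIntegral.integral_const_mul]
    have e2 : (∫ z in (0:ℝ)..Z0,
          (z ^ 2 - z ^ 4 / 3) / ((1 - z ^ 2) * (1 + r ^ 2 * (1 - z ^ 2) / 4)))
        = (∫ z in (0:ℝ)..Z,
            (z ^ 2 - z ^ 4 / 3) / ((1 - z ^ 2) * (1 + r ^ 2 * (1 - z ^ 2) / 4)))
          + (∫ z in Z..Z0,
            (z ^ 2 - z ^ 4 / 3) / ((1 - z ^ 2) * (1 + r ^ 2 * (1 - z ^ 2) / 4))) :=
      (intervalIntegral.integral_add_adjacent_intervals hIntF1 hIntF2).symm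
    have e3 : (∫ z in (0:ℝ)..1, (z ^ 2 - z ^ 4 / 3) / (1 + r ^ 2 * (1 - z ^ 2) / 4))
        = (∫ z in (0:ℝ)..Z0, (z ^ 2 - z ^ 4 / 3) / (1 + r ^ 2 * (1 - z ^ 2) / 4))
          + (∫ z in Z0..(1:ℝ), (z ^ 2 - z ^ 4 / 3) / (1 + r ^ 2 * (1 - z ^ 2) / 4)) :=
      (intervalIntegral.integral_add_adjacent_intervals hIntFD1 hIntFD2).symm
    set J1 := ∫ z in Z..Z0,
        (z ^ 2 - z ^ 4 / 3) / ((1 - z ^ 2) * (1 + r ^ 2 * (1 - z ^ 2) / 4)) with hJ1def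
    set J2 := ∫ z in Z0..(1:ℝ), (z ^ 2 - z ^ 4 / 3) / (1 + r ^ 2 * (1 - z ^ 2) / 4) with hJ2def
    set J3 := ∫ z in (0:ℝ)..Z, (z - z ^ 3 / 3) / (P - r * z / 2) with hJ3def
    have key : UL Λ r - U r = 1 / π * J1 - r ^ 2 / (4 * π) * J2 - r / (2 * π) * J3 := by
      rw [hUL, hBC, hBLr, U, e1, e2, e3]
      ring
    -- bound on J2
    have hb2 : |J2| ≤ 2 / 3 * (1 - Z0) := by
      have h := intervalIntegral.norm_integral_le_of_norm_le_const (C := 2/3)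
        (f := fun z : ℝ => (z ^ 2 - z ^ 4 / 3) / (1 + r ^ 2 * (1 - z ^ 2) / 4))
        (a := Z0) (b := 1) ?_
      · rw [Real.norm_eq_abs] at h
        rw [hJ2def]
        calc |∫ z in Z0..(1:ℝ), (z ^ 2 - z ^ 4 / 3) / (1 + r ^ 2 * (1 - z ^ 2) / 4)|
            ≤ 2 / 3 * |1 - Z0| := h
          _ = 2 / 3 * (1 - Z0) := by rw [abs_of_nonneg (by linarith)]
      · intro z hz
        rw [Set.uIoc_of_le hZ01] at hz
        have hz0 : (0:ℝ) ≤ z := le_trans hZ0pos hz.1.le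
        have hz1 : z ≤ 1 := hz.2
        have hD := hD1 z hz0 hz1
        have hD' : (1:ℝ) ≤ 1 + r ^ 2 * (1 - z ^ 2) / 4 := by
          linarith [mul_nonneg (sq_nonneg r) (by linarith [sqone hz0 hz1] : (0:ℝ) ≤ 1 - z ^ 2)]
        rw [Real.norm_eq_abs,
          abs_of_nonneg (div_nonneg (fnum_nonneg hz0 hz1) hD.le)]
        calc (z ^ 2 - z ^ 4 / 3) / (1 + r ^ 2 * (1 - z ^ 2) / 4)
            ≤ z ^ 2 - z ^ 4 / 3 := div_le_self (fnum_nonneg hz0 hz1) hD'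
          _ ≤ 2 / 3 := fnum_le hz0 hz1
    -- bound on J3
    have hb3 : |J3| ≤ 4 / (3 * P) := by
      have h := intervalIntegral.norm_integral_le_of_norm_le_const (C := 4 / (3 * P))
        (f := fun z : ℝ => (z - z ^ 3 / 3) / (P - r * z / 2)) (a := 0) (b := Z) ?_
      · rw [Real.norm_eq_abs] at h
        rw [hJ3def]
        calc |∫ z in (0:ℝ)..Z, (z - z ^ 3 / 3) / (P - r * z / 2)|
            ≤ 4 / (3 * P) * |Z - 0| := h
          _ = 4 / (3 * P) * Z := by rw [sub_zero, abs_of_nonneg hZpos]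
          _ ≤ 4 / (3 * P) * 1 := by
              apply mul_le_mul_of_nonneg_left hZ1 (by positivity)
          _ = 4 / (3 * P) := mul_one _
      · intro z hz
        rw [Set.uIoc_of_le hZpos] at hz
        have hz0 : (0:ℝ) ≤ z := hz.1.le
        have hz1 : z ≤ 1 := le_trans hz.2 hZ1
        have hD := hD3 z ⟨hz0, hz.2⟩
        have hD' : (P + 1) / 2 ≤ P - r * z / 2 := by
          have h1 : r * z ≤ r * Z := mul_le_mul_of_nonneg_left hz.2 hrpos.le
          rw [hrZ] at h1
          linarith
        rw [Real.norm_eq_abs,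
          abs_of_nonneg (div_nonneg (gnum_nonneg hz0 hz1) hD.le)]
        calc (z - z ^ 3 / 3) / (P - r * z / 2)
            ≤ (2 / 3) / ((P + 1) / 2) :=
              div_le_div₀ (by norm_num) (gnum_le hz0 hz1) (by linarith) hD'
          _ ≤ 4 / (3 * P) := by
              rw [div_le_div_iff₀ (by linarith) (by positivity)]
              linarith [hP1, hP0]
    -- J1 is nonnegative
    have hJ1nonneg : 0 ≤ J1 := by
      rw [hJ1def]
      apply intervalIntegral.integral_nonneg hZZ0
      intro z hz
      have hz' : z ∈ Set.Icc (0:ℝ) Z0 := ⟨le_trans hZpos hz.1, hz.2⟩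
      exact div_nonneg (fnum_nonneg hz'.1 (le_trans hz'.2 hZ01))
        (mul_pos (hD2 z hz') (hD1 z hz'.1 (le_trans hz'.2 hZ01))).le
    -- lower bound on 1 - Z0
    have hu0 : (0:ℝ) < 1 - Z0 := by linarith
    have hu1 : (0:ℝ) < 1 - Z := by linarith [lt_of_le_of_lt hZZ0 hZ0lt1]
    have hu0lb : 1 / (2 * P ^ 2) ≤ 1 - Z0 := by
      have h2 : 1 - Z0 = (P - Λ) / P := by rw [hZ0def]; field_simp
      rw [h2, div_le_div_iff₀ (by positivity) hP0]
      have ha : 2 * P * Λ ≤ 1 + 2 * Λ ^ 2 := by linarith [sq_nonneg (P - Λ), hP2]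
      have hb := mul_le_mul_of_nonneg_left ha hP0.le
      linarith [hP3, hb]
    -- FTC for the comparison function
    have hderiv : ∀ z ∈ Set.uIcc Z Z0,
        HasDerivAt (fun x : ℝ => Real.log (1 + r ^ 2 / 4 * (1 - x)) - Real.log (1 - x))
          (1 / ((1 - z) * (1 + r ^ 2 / 4 * (1 - z)))) z := by
      intro z hz
      rw [Set.uIcc_of_le hZZ0] at hz
      have hz1 : z < 1 := lt_of_le_of_lt hz.2 hZ0lt1
      have h1 : (0:ℝ) < 1 - z := by linarith
      have h2 : (0:ℝ) < 1 + r ^ 2 / 4 * (1 - z) := by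
        linarith [mul_nonneg (sq_nonneg r) h1.le]
      have hd1 : HasDerivAt (fun x : ℝ => Real.log (1 + r ^ 2 / 4 * (1 - x)))
          (-(r ^ 2 / 4) / (1 + r ^ 2 / 4 * (1 - z))) z := by
        have hinner : HasDerivAt (fun x : ℝ => 1 + r ^ 2 / 4 * (1 - x)) (-(r ^ 2 / 4)) z := by
          simpa using (((hasDerivAt_id z).const_sub 1).const_mul (r ^ 2 / 4)).const_add 1
        exact hinner.log h2.ne'
      have hd2 : HasDerivAt (fun x : ℝ => Real.log (1 - x)) ((-1) / (1 - z)) z := by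
        have hinner : HasDerivAt (fun x : ℝ => 1 - x) (-1) z := by
          simpa using (hasDerivAt_id z).const_sub 1
        exact hinner.log h1.ne'
      refine (hd1.sub hd2).congr_deriv ?_
      rw [div_sub_div _ _ h2.ne' h1.ne', div_eq_div_iff (mul_ne_zero h2.ne' h1.ne') (mul_ne_zero h1.ne' h2.ne')]
      ring
    have hftc := intervalIntegral.integral_eq_sub_of_hasDerivAt hderiv hIntPsid
    -- monotone comparison
    have hmono : J1 ≤ ∫ z in Z..Z0, (2:ℝ) / 3 * (1 / ((1 - z) * (1 + r ^ 2 / 4 * (1 - z)))) := by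
      rw [hJ1def]
      apply intervalIntegral.integral_mono_on hZZ0 hIntF2 (hIntPsid.const_mul _)
      intro z hz
      have hz0 : (0:ℝ) ≤ z := le_trans hZpos hz.1
      have hzZ0 : z ≤ Z0 := hz.2
      have hz1 : z ≤ 1 := le_trans hzZ0 hZ01
      have hzlt1 : z < 1 := lt_of_le_of_lt hzZ0 hZ0lt1
      have h1 : (0:ℝ) < 1 - z := by linarith
      have h2 : (0:ℝ) < 1 + r ^ 2 / 4 * (1 - z) := by
        linarith [mul_nonneg (sq_nonneg r) h1.le]
      have eA : 1 - z ≤ 1 - z ^ 2 := by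
        linarith [mul_nonneg hz0 h1.le]
      have eB : 1 + r ^ 2 / 4 * (1 - z) ≤ 1 + r ^ 2 * (1 - z ^ 2) / 4 := by
        linarith [mul_nonneg (sq_nonneg r) (mul_nonneg hz0 h1.le)]
      calc (z ^ 2 - z ^ 4 / 3) / ((1 - z ^ 2) * (1 + r ^ 2 * (1 - z ^ 2) / 4))
          ≤ (2 / 3) / ((1 - z) * (1 + r ^ 2 / 4 * (1 - z))) := by
            apply div_le_div₀ (by norm_num) (fnum_le hz0 hz1) (mul_pos h1 h2)
            exact mul_le_mul eA eB h2.le (by linarith [mul_nonneg hz0 hz0, sqone hz0 hz1])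
        _ = 2 / 3 * (1 / ((1 - z) * (1 + r ^ 2 / 4 * (1 - z)))) := by rw [mul_one_div]
    -- bound on the log difference
    have hpsidiff : (Real.log (1 + r ^ 2 / 4 * (1 - Z0)) - Real.log (1 - Z0))
        - (Real.log (1 + r ^ 2 / 4 * (1 - Z)) - Real.log (1 - Z)) ≤ 20 * (r / P) := by
      rcases le_or_gt r (P / 4) with hcase | hcase
      · -- small r
        have hZ0Z : Z0 - Z ≤ r / P ^ 3 := by
          rw [hZ0def, hZdef]
          exact Zdiff_aux Λ r P Es hΛ0 hrpos hP0 hEs0 hP2 hEs2 hPΛ.le hcase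
        have hlogmono : Real.log (1 + r ^ 2 / 4 * (1 - Z0)) ≤
            Real.log (1 + r ^ 2 / 4 * (1 - Z)) := by
          have hm : r ^ 2 / 4 * (1 - Z0) ≤ r ^ 2 / 4 * (1 - Z) :=
            mul_le_mul_of_nonneg_left (by linarith) (by positivity)
          apply Real.log_le_log (by linarith [mul_nonneg (sq_nonneg r) hu0.le])
          linarith
        have hlogsub : Real.log (1 - Z) - Real.log (1 - Z0) ≤ (1 - Z) / (1 - Z0) - 1 := by
          rw [← Real.log_div hu1.ne' hu0.ne']
          exact Real.log_le_sub_one_of_pos (by positivity)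
        have hfrac : (1 - Z) / (1 - Z0) - 1 ≤ 2 * (r / P) := by
          rw [div_sub_one hu0.ne', div_le_iff₀ hu0]
          have h5 : 2 * (r / P) * (1 / (2 * P ^ 2)) = r / P ^ 3 := by
            field_simp
          have h6 := mul_le_mul_of_nonneg_left hu0lb
            (by positivity : (0:ℝ) ≤ 2 * (r / P))
          linarith [hZ0Z, h6, h5]
        have h20 : 2 * (r / P) ≤ 20 * (r / P) := by
          have : (0:ℝ) ≤ r / P := by positivity
          linarith
        linarith
      · -- large r
        have hq : 1 ≤ 128 * (r ^ 2 / 4 * (1 - Z0)) := by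
          have h1 : P ^ 2 / 64 ≤ r ^ 2 / 4 := by
            have h := mul_le_mul hcase.le hcase.le (by positivity : (0:ℝ) ≤ P / 4) hrpos.le
            linarith [h]
          have h2 : (P ^ 2 / 64) * (1 / (2 * P ^ 2)) ≤ (r ^ 2 / 4) * (1 - Z0) :=
            mul_le_mul h1 hu0lb (by positivity) (by positivity)
          have h3 : (P ^ 2 / 64) * (1 / (2 * P ^ 2)) = 1 / 128 := by
            field_simp
            ring
          linarith [h2, h3]
        have hl1 : Real.log (1 + r ^ 2 / 4 * (1 - Z0)) ≤
            Real.log 129 + Real.log (r ^ 2 / 4) + Real.log (1 - Z0) := by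
          have hpos : (0:ℝ) < r ^ 2 / 4 * (1 - Z0) := by positivity
          have harg : 1 + r ^ 2 / 4 * (1 - Z0) ≤ 129 * (r ^ 2 / 4 * (1 - Z0)) := by
            linarith [hq]
          calc Real.log (1 + r ^ 2 / 4 * (1 - Z0))
              ≤ Real.log (129 * (r ^ 2 / 4 * (1 - Z0))) :=
                Real.log_le_log (by positivity) harg
            _ = Real.log 129 + Real.log (r ^ 2 / 4) + Real.log (1 - Z0) := by
                rw [Real.log_mul (by norm_num) hpos.ne',
                  Real.log_mul (by positivity) hu0.ne']
                ring
        have hl2 : Real.log (r ^ 2 / 4) + Real.log (1 - Z) ≤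
            Real.log (1 + r ^ 2 / 4 * (1 - Z)) := by
          rw [← Real.log_mul (by positivity) hu1.ne']
          apply Real.log_le_log (by positivity)
          linarith
        have h20 : (5:ℝ) ≤ 20 * (r / P) := by
          have : (1:ℝ) / 4 ≤ r / P := by rw [le_div_iff₀ hP0]; linarith
          linarith
        linarith [hl1, hl2, log129]
    -- assemble the bound on J1
    have hb1 : J1 ≤ 2 / 3 * (20 * (r / P)) := by
      calc J1 ≤ ∫ z in Z..Z0, (2:ℝ) / 3 * (1 / ((1 - z) * (1 + r ^ 2 / 4 * (1 - z)))) := hmono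
        _ = 2 / 3 * ∫ z in Z..Z0, 1 / ((1 - z) * (1 + r ^ 2 / 4 * (1 - z))) :=
            intervalIntegral.integral_const_mul _ _
        _ = 2 / 3 * ((Real.log (1 + r ^ 2 / 4 * (1 - Z0)) - Real.log (1 - Z0))
              - (Real.log (1 + r ^ 2 / 4 * (1 - Z)) - Real.log (1 - Z))) := by rw [hftc]
        _ ≤ 2 / 3 * (20 * (r / P)) := by
            apply mul_le_mul_of_nonneg_left hpsidiff (by norm_num)
    -- final assembly
    have h1Z0 : 1 - Z0 ≤ 1 / P ^ 2 := by
      have hm := mul_le_mul_of_nonneg_left hPΛ.le (mul_nonneg hP0.le hΛ0.le)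
      have h : (P - Λ) * P ^ 2 ≤ 1 * P := by
        linarith [hP3, hm]
      have h' : (P - Λ) / P ≤ 1 / P ^ 2 := by
        rw [div_le_div_iff₀ hP0 (by positivity)]
        linarith [h]
      have h2 : 1 - Z0 = (P - Λ) / P := by rw [hZ0def]; field_simp
      linarith
    have hr2P : r ≤ 2 * P := by linarith
    have hb1' : |J1| ≤ 2 / 3 * (20 * (r / P)) := by
      rw [abs_of_nonneg hJ1nonneg]; exact hb1
    have hb2' : |J2| ≤ 2 / 3 * (1 / P ^ 2) := by
      calc |J2| ≤ 2 / 3 * (1 - Z0) := hb2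
        _ ≤ 2 / 3 * (1 / P ^ 2) := by linarith
    calc |UL Λ r - U r| = |1 / π * J1 - r ^ 2 / (4 * π) * J2 - r / (2 * π) * J3| := by rw [key]
      _ ≤ |1 / π * J1| + |r ^ 2 / (4 * π) * J2| + |r / (2 * π) * J3| := abs3 _ _ _
      _ = 1 / π * |J1| + r ^ 2 / (4 * π) * |J2| + r / (2 * π) * |J3| := by
          rw [abs_mul, abs_mul, abs_mul, abs_of_pos (by positivity : (0:ℝ) < 1 / π),
            abs_of_nonneg (by positivity : (0:ℝ) ≤ r ^ 2 / (4 * π)),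
            abs_of_nonneg (by positivity : (0:ℝ) ≤ r / (2 * π))]
      _ ≤ 1 / π * (2 / 3 * (20 * (r / P))) + r ^ 2 / (4 * π) * (2 / 3 * (1 / P ^ 2))
            + r / (2 * π) * (4 / (3 * P)) := by
          gcongr
      _ ≤ 258 / π * (r / (2 * P)) := by
          have eL : 1 / π * (2 / 3 * (20 * (r / P))) + r ^ 2 / (4 * π) * (2 / 3 * (1 / P ^ 2))
              + r / (2 * π) * (4 / (3 * P))
              = 1 / π * (40 / 3 * (r / P) + r ^ 2 / (6 * P ^ 2) + 2 / 3 * (r / P)) := by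
            ring
          have eR : 258 / π * (r / (2 * P)) = 1 / π * (129 * (r / P)) := by ring
          rw [eL, eR]
          apply mul_le_mul_of_nonneg_left _ (by positivity)
          have hs : r / P ≤ 2 := by rw [div_le_iff₀ hP0]; linarith
          have hs0 : (0:ℝ) ≤ r / P := by positivity
          have hsq : r ^ 2 / (6 * P ^ 2) = (r / P) ^ 2 / 6 := by
            rw [div_pow]; ring
          have hss : (r / P) ^ 2 ≤ 2 * (r / P) := by
            rw [sq]
            exact mul_le_mul_of_nonneg_right hs hs0
          rw [hsq]
          linarith [hss, hs0]
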